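/- arXiv:quant-ph/0108062 — 2 statements merged into one kernel-verified Lean document; each statement's English description precedes it below -/
import Mathlib

section
/- A unitary V on ℂᵈ ⊗ ℂᵈ is primitive if and only if V = S ⊗ T or V = (S ⊗ T)P for some unitaries S, T on ℂᵈ, where P is the swap operator P(x ⊗ y) = y ⊗ x. -/
open Matrix Kronecker Complex

/-- The tensor (Kronecker) product of two vectors of `ℂᵈ`, as a vector of `ℂᵈ ⊗ ℂᵈ`. -/
def tensorVec {d : ℕ} (x y : Fin d → ℂ) : Fin d × Fin d → ℂ := fun p => x p.1 * y p.2

/-- A vector of `ℂᵈ ⊗ ℂᵈ` is decomposable if it is a tensor product of two vectors. -/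
def Decomposable {d : ℕ} (z : Fin d × Fin d → ℂ) : Prop := ∃ u v : Fin d → ℂ, z = tensorVec u v

/-- A gate on `ℂᵈ ⊗ ℂᵈ` is primitive if it maps decomposable tensors to decomposable tensors. -/
def Primitive {d : ℕ} (V : Matrix (Fin d × Fin d) (Fin d × Fin d) ℂ) : Prop :=
  ∀ x y : Fin d → ℂ, Decomposable (V.mulVec (tensorVec x y))

/-!
Write `rowSpace x = x ⊗ ℂᵈ` and `colSpace y = ℂᵈ ⊗ y`. A sum of two product tensors is a
product tensor only if their left or their right factors are parallel; hence a subspace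
consisting of product tensors is the union of its intersections with some `rowSpace a` and some
`colSpace b`, so it lies in one of them. An injective primitive `V` therefore maps every
`rowSpace x` (of dimension `d ≥ 2`) onto some `rowSpace a` or onto some `colSpace b`, and it does
the same for all `x`: if `rowSpace x₁ ↦ rowSpace a` and `rowSpace x₂ ↦ colSpace b`, then `a ⊗ b`
is in both images, so `x₁ ∥ x₂` and `rowSpace a` would equal `colSpace b`, although these two
meet only in the line through `a ⊗ b`. Applied to `V P`, the same dichotomy holds for the spaces
`colSpace y`. If rows and columns both went to row spaces (or both to column spaces), all rows
(columns) would have the same image; so either rows go to rows and columns to columns, and then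
`V = S ⊗ T`, or the reverse, and then `V P = S ⊗ T`. Finally, `S ⊗ T` unitary forces `Sᴴ S` and
`Tᴴ T` to be reciprocal positive scalars, so `S` and `T` can be rescaled to unitaries.
-/

open Module Function

section

variable {d : ℕ}

lemma tensorVec_apply (x y : Fin d → ℂ) (p : Fin d × Fin d) : tensorVec x y p = x p.1 * y p.2 :=
  rfl

def tensorVecₗ : (Fin d → ℂ) →ₗ[ℂ] (Fin d → ℂ) →ₗ[ℂ] Fin d × Fin d → ℂ :=
  LinearMap.mk₂ ℂ tensorVec
    (fun _ _ _ => funext fun _ => add_mul _ _ _)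
    (fun _ _ _ => funext fun _ => mul_assoc _ _ _)
    (fun _ _ _ => funext fun _ => mul_add _ _ _)
    (fun _ _ _ => funext fun _ => mul_left_comm _ _ _)

@[simp]
lemma tensorVecₗ_apply (x y : Fin d → ℂ) : tensorVecₗ x y = tensorVec x y :=
  rfl

lemma tensorVec_smul_left (c : ℂ) (x y : Fin d → ℂ) : tensorVec (c • x) y = c • tensorVec x y :=
  tensorVecₗ.map_smul₂ c x y

lemma tensorVec_smul_right (c : ℂ) (x y : Fin d → ℂ) : tensorVec x (c • y) = c • tensorVec x y :=
  (tensorVecₗ x).map_smul c y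

lemma tensorVec_add_left (x x' y : Fin d → ℂ) :
    tensorVec (x + x') y = tensorVec x y + tensorVec x' y :=
  tensorVecₗ.map_add₂ x x' y

lemma tensorVec_sub_right (x y y' : Fin d → ℂ) :
    tensorVec x (y - y') = tensorVec x y - tensorVec x y' :=
  (tensorVecₗ x).map_sub y y'

lemma tensorVec_comp_swap (x y : Fin d → ℂ) : tensorVec x y ∘ Prod.swap = tensorVec y x :=
  funext fun _ => mul_comm _ _

lemma tensorVec_single_one (i j : Fin d) :
    tensorVec (Pi.single i 1) (Pi.single j 1) = Pi.single (i, j) (1 : ℂ) := by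
  ext ⟨p, q⟩
  by_cases hp : p = i <;> by_cases hq : q = j <;> simp [tensorVec, hp, hq]

lemma tensorVec_eq_zero_iff {x y : Fin d → ℂ} : tensorVec x y = 0 ↔ x = 0 ∨ y = 0 := by
  refine ⟨fun h => ?_, by rintro (rfl | rfl) <;> ext <;> simp [tensorVec]⟩
  by_contra! hxy
  obtain ⟨i, hi⟩ := Function.ne_iff.mp hxy.1
  obtain ⟨j, hj⟩ := Function.ne_iff.mp hxy.2
  exact mul_ne_zero hi hj (congrFun h (i, j))

lemma tensorVec_single_ne_zero (i j : Fin d) :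
    tensorVec (Pi.single i 1) (Pi.single j 1) ≠ (0 : Fin d × Fin d → ℂ) := by
  simp [tensorVec_eq_zero_iff]

lemma tensorVecₗ_injective {x : Fin d → ℂ} (hx : x ≠ 0) : Injective (tensorVecₗ x) :=
  (injective_iff_map_eq_zero _).mpr fun _ h => (tensorVec_eq_zero_iff.mp h).resolve_left hx

lemma tensorVecₗ_flip_injective {y : Fin d → ℂ} (hy : y ≠ 0) : Injective (tensorVecₗ.flip y) :=
  (injective_iff_map_eq_zero _).mpr fun _ h => (tensorVec_eq_zero_iff.mp h).resolve_right hy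

lemma exists_smul_of_tensorVec_eq {a a' v v' : Fin d → ℂ} (h : tensorVec a v = tensorVec a' v')
    (h0 : tensorVec a v ≠ 0) : ∃ c : ℂ, c ≠ 0 ∧ a' = c • a := by
  obtain ⟨⟨i, j⟩, hij⟩ := Function.ne_iff.mp h0
  simp only [tensorVec_apply, Pi.zero_apply] at hij
  have hv' : v' j ≠ 0 := fun hv' => hij (by simpa [tensorVec, hv'] using congrFun h (i, j))
  refine ⟨v j / v' j, div_ne_zero (right_ne_zero_of_mul hij) hv', funext fun k => ?_⟩
  have := congrFun h (k, j)
  simp only [tensorVec_apply, Pi.smul_apply, smul_eq_mul] at this ⊢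
  field_simp
  linear_combination -this

lemma eq_zero_of_tensorVec_add_tensorVec_eq_zero {a a' u v : Fin d → ℂ}
    (ha : LinearIndependent ℂ ![a, a']) (h : tensorVec a u + tensorVec a' v = 0) :
    u = 0 ∧ v = 0 := by
  have hq : ∀ q, u q = 0 ∧ v q = 0 := fun q =>
    LinearIndependent.pair_iff.mp ha (u q) (v q)
      (funext fun p => by simpa [tensorVec, mul_comm] using congrFun h (p, q))
  exact ⟨funext fun q => (hq q).1, funext fun q => (hq q).2⟩

lemma kronecker_mulVec_tensorVec (S T : Matrix (Fin d) (Fin d) ℂ) (x y : Fin d → ℂ) :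
    (S ⊗ₖ T) *ᵥ tensorVec x y = tensorVec (S *ᵥ x) (T *ᵥ y) := by
  ext ⟨p, q⟩
  simp only [mulVec, dotProduct, tensorVec_apply, kroneckerMap_apply, Fintype.sum_prod_type,
    Finset.sum_mul_sum]
  exact Finset.sum_congr rfl fun i _ => Finset.sum_congr rfl fun j _ => by ring

def rowSpace (x : Fin d → ℂ) : Submodule ℂ (Fin d × Fin d → ℂ) :=
  LinearMap.range (tensorVecₗ x)

def colSpace (y : Fin d → ℂ) : Submodule ℂ (Fin d × Fin d → ℂ) :=
  LinearMap.range (tensorVecₗ.flip y)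

lemma mem_rowSpace {x : Fin d → ℂ} {z : Fin d × Fin d → ℂ} :
    z ∈ rowSpace x ↔ ∃ v, tensorVec x v = z :=
  Iff.rfl

lemma tensorVec_mem_rowSpace (x v : Fin d → ℂ) : tensorVec x v ∈ rowSpace x :=
  ⟨v, rfl⟩

lemma tensorVec_mem_colSpace (u y : Fin d → ℂ) : tensorVec u y ∈ colSpace y :=
  ⟨u, rfl⟩

@[simp]
lemma rowSpace_zero : rowSpace (0 : Fin d → ℂ) = ⊥ := by
  simp [rowSpace]

@[simp]
lemma colSpace_zero : colSpace (0 : Fin d → ℂ) = ⊥ := by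
  simp [colSpace]

lemma rowSpace_smul {c : ℂ} (hc : c ≠ 0) (x : Fin d → ℂ) : rowSpace (c • x) = rowSpace x := by
  rw [rowSpace, map_smul, LinearMap.range_smul _ _ hc, rowSpace]

lemma finrank_rowSpace {x : Fin d → ℂ} (hx : x ≠ 0) : finrank ℂ (rowSpace x) = d := by
  rw [rowSpace, LinearMap.finrank_range_of_inj (tensorVecₗ_injective hx), finrank_fin_fun]

lemma finrank_rowSpace_le (x : Fin d → ℂ) : finrank ℂ (rowSpace x) ≤ d :=
  (LinearMap.finrank_range_le _).trans_eq (finrank_fin_fun ℂ)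

lemma finrank_colSpace_le (y : Fin d → ℂ) : finrank ℂ (colSpace y) ≤ d :=
  (LinearMap.finrank_range_le _).trans_eq (finrank_fin_fun ℂ)

lemma rowSpace_eq_of_mem {a a' : Fin d → ℂ} {z : Fin d × Fin d → ℂ} (hz : z ≠ 0)
    (h : z ∈ rowSpace a) (h' : z ∈ rowSpace a') : rowSpace a = rowSpace a' := by
  obtain ⟨v, rfl⟩ := h
  obtain ⟨v', hv'⟩ := h'
  obtain ⟨c, hc, rfl⟩ := exists_smul_of_tensorVec_eq hv'.symm hz
  exact (rowSpace_smul hc a).symm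

lemma rowSpace_inf_colSpace_le (a b : Fin d → ℂ) :
    rowSpace a ⊓ colSpace b ≤ ℂ ∙ tensorVec a b := by
  rintro z ⟨⟨v, rfl⟩, ⟨u, huv⟩⟩
  by_cases ha : a = 0
  · simp [ha]
  obtain ⟨i, hi⟩ := Function.ne_iff.mp ha
  refine Submodule.mem_span_singleton.mpr ⟨u i / a i, funext fun ⟨k, l⟩ => ?_⟩
  have := congrFun huv (i, l)
  simp only [tensorVecₗ_apply, LinearMap.flip_apply, tensorVec_apply, Pi.smul_apply,
    smul_eq_mul, Pi.zero_apply] at this hi ⊢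
  field_simp
  linear_combination a k * this

lemma rowSpace_ne_colSpace (hd : 2 ≤ d) {a : Fin d → ℂ} (ha : a ≠ 0) (b : Fin d → ℂ) :
    rowSpace a ≠ colSpace b := by
  intro h
  have hle : rowSpace a ≤ ℂ ∙ tensorVec a b :=
    (le_inf le_rfl h.le).trans (rowSpace_inf_colSpace_le a b)
  have := (Submodule.finrank_mono hle).trans (finrank_span_le_card ({tensorVec a b} : Set _))
  rw [finrank_rowSpace ha, Set.toFinset_singleton, Finset.card_singleton] at this
  omega

lemma eq_div_smul_of_mul_eq_mul {ι K : Type*} [Field K] {u a : ι → K} {k : ι} (hk : a k ≠ 0)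
    (h : ∀ i, u i * a k = a i * u k) : u = (u k / a k) • a :=
  funext fun i => by
    simp only [Pi.smul_apply, smul_eq_mul]
    field_simp
    linear_combination h i

lemma Decomposable.mem_rowSpace_or_mem_colSpace {z : Fin d × Fin d → ℂ} {a b : Fin d → ℂ}
    (hz : Decomposable z) (hsum : Decomposable (z + tensorVec a b)) (ha : a ≠ 0) (hb : b ≠ 0) :
    z ∈ rowSpace a ∨ z ∈ colSpace b := by
  obtain ⟨u, v, rfl⟩ := hz
  obtain ⟨p, q, hpq⟩ := hsum
  have h m n : u m * v n + a m * b n = p m * q n := by simpa [tensorVec] using congrFun hpq (m, n)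
  -- a `2 × 2` minor of the product tensor `u ⊗ v + a ⊗ b = p ⊗ q`, expanded
  have minor i j k l : (u i * a k - a i * u k) * (v j * b l - v l * b j) = 0 := by
    linear_combination (u k * v l + a k * b l) * h i j + p i * q j * h k l
      - (u k * v j + a k * b j) * h i l - p i * q l * h k j
  obtain ⟨k, hk⟩ := Function.ne_iff.mp ha
  obtain ⟨l, hl⟩ := Function.ne_iff.mp hb
  by_cases hu : ∀ i, u i * a k = a i * u k
  · left
    rw [eq_div_smul_of_mul_eq_mul hk hu, tensorVec_smul_left]
    exact (rowSpace a).smul_mem _ (tensorVec_mem_rowSpace a v)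
  · right
    obtain ⟨i, hi⟩ := not_forall.mp hu
    have hv j : v j * b l = b j * v l := by
      linear_combination (mul_eq_zero.mp (minor i j k l)).resolve_left (sub_ne_zero.mpr hi)
    rw [eq_div_smul_of_mul_eq_mul hl hv, tensorVec_smul_right]
    exact (colSpace b).smul_mem _ (tensorVec_mem_colSpace u b)

lemma exists_le_rowSpace_or_le_colSpace {W : Submodule ℂ (Fin d × Fin d → ℂ)}
    (hW : ∀ z ∈ W, Decomposable z) : (∃ a, W ≤ rowSpace a) ∨ (∃ b, W ≤ colSpace b) := by
  by_cases hW0 : W = ⊥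
  · exact Or.inl ⟨0, hW0.trans_le bot_le⟩
  obtain ⟨z₀, hz₀, hz₀0⟩ := Submodule.exists_mem_ne_zero_of_ne_bot hW0
  obtain ⟨a, b, rfl⟩ := hW z₀ hz₀
  obtain ⟨ha, hb⟩ : a ≠ 0 ∧ b ≠ 0 := by simpa [tensorVec_eq_zero_iff, not_or] using hz₀0
  have hcover : (W : Set (Fin d × Fin d → ℂ)) ⊆ rowSpace a ∪ colSpace b := fun z hz =>
    (hW z hz).mem_rowSpace_or_mem_colSpace (hW _ (W.add_mem hz hz₀)) ha hb
  exact (AddSubgroupClass.subset_union.mp hcover).imp (⟨a, ·⟩) (⟨b, ·⟩)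

lemma LinearMap.exists_eq_apply_of_forall_mem_range {R M N P : Type*} [Ring R] [AddCommGroup M]
    [AddCommGroup N] [AddCommGroup P] [Module R M] [Module R N] [Module R P] {φ : N →ₗ[R] P}
    (hφ : Injective φ) (g : M →ₗ[R] P) (h : ∀ m, g m ∈ LinearMap.range φ) :
    ∃ S : M →ₗ[R] N, ∀ m, g m = φ (S m) :=
  ⟨(LinearEquiv.ofInjective φ hφ).symm ∘ₗ g.codRestrict _ h, fun m => by simp⟩

def swapₗ : (Fin d × Fin d → ℂ) →ₗ[ℂ] (Fin d × Fin d → ℂ) :=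
  LinearMap.funLeft ℂ ℂ Prod.swap

@[simp]
lemma swapₗ_tensorVec (x y : Fin d → ℂ) : swapₗ (tensorVec x y) = tensorVec y x :=
  tensorVec_comp_swap x y

lemma swapₗ_injective : Injective (swapₗ : (Fin d × Fin d → ℂ) →ₗ[ℂ] _) :=
  LinearMap.funLeft_injective_of_surjective _ _ _ Prod.swap_surjective

lemma map_swapₗ_colSpace (b : Fin d → ℂ) : (colSpace b).map swapₗ = rowSpace b := by
  rw [colSpace, ← LinearMap.range_comp, rowSpace]
  exact congrArg LinearMap.range (LinearMap.ext fun u => swapₗ_tensorVec u b)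

def MapsRowsToRows (f : (Fin d × Fin d → ℂ) →ₗ[ℂ] (Fin d × Fin d → ℂ)) : Prop :=
  ∀ x, ∃ a, (rowSpace x).map f = rowSpace a

def MapsRowsToCols (f : (Fin d × Fin d → ℂ) →ₗ[ℂ] (Fin d × Fin d → ℂ)) : Prop :=
  ∀ x, ∃ b, (rowSpace x).map f = colSpace b

section

variable {f : (Fin d × Fin d → ℂ) →ₗ[ℂ] (Fin d × Fin d → ℂ)}

lemma MapsRowsToCols.swapₗ_comp (h : MapsRowsToCols f) : MapsRowsToRows (swapₗ ∘ₗ f) :=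
  fun x => (h x).imp fun b hb => by rw [Submodule.map_comp, hb, map_swapₗ_colSpace]

lemma finrank_map_rowSpace (hf : Injective f) {x : Fin d → ℂ} (hx : x ≠ 0) :
    finrank ℂ ((rowSpace x).map f) = d := by
  rw [← LinearEquiv.finrank_eq (Submodule.equivMapOfInjective f hf _), finrank_rowSpace hx]

lemma map_rowSpace_eq_rowSpace_or_colSpace (hd : 2 ≤ d) (hf : Injective f)
    (hP : ∀ x y, Decomposable (f (tensorVec x y))) {x : Fin d → ℂ} (hx : x ≠ 0) :
    (∃ a ≠ 0, (rowSpace x).map f = rowSpace a) ∨ (∃ b ≠ 0, (rowSpace x).map f = colSpace b) := by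
  have hW : ∀ z ∈ (rowSpace x).map f, Decomposable z := by
    rintro _ ⟨_, ⟨y, rfl⟩, rfl⟩
    exact hP x y
  have hdim := finrank_map_rowSpace hf hx
  rcases exists_le_rowSpace_or_le_colSpace hW with ⟨a, ha⟩ | ⟨b, hb⟩
  · have heq := Submodule.eq_of_le_of_finrank_le ha ((finrank_rowSpace_le a).trans hdim.ge)
    refine Or.inl ⟨a, ?_, heq⟩
    rintro rfl
    rw [heq, rowSpace_zero, finrank_bot] at hdim
    omega
  · have heq := Submodule.eq_of_le_of_finrank_le hb ((finrank_colSpace_le b).trans hdim.ge)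
    refine Or.inr ⟨b, ?_, heq⟩
    rintro rfl
    rw [heq, colSpace_zero, finrank_bot] at hdim
    omega

theorem mapsRowsToRows_or_mapsRowsToCols (hd : 2 ≤ d) (hf : Injective f)
    (hP : ∀ x y, Decomposable (f (tensorVec x y))) : MapsRowsToRows f ∨ MapsRowsToCols f := by
  by_contra! h
  simp only [MapsRowsToRows, MapsRowsToCols, not_forall, not_exists] at h
  obtain ⟨⟨x₁, hx₁⟩, ⟨x₂, hx₂⟩⟩ := h
  have hx₁0 : x₁ ≠ 0 := by
    rintro rfl
    exact hx₁ 0 (by simp)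
  have hx₂0 : x₂ ≠ 0 := by
    rintro rfl
    exact hx₂ 0 (by simp)
  obtain ⟨b, hb, hb₁⟩ := (map_rowSpace_eq_rowSpace_or_colSpace hd hf hP hx₁0).resolve_left
    fun ⟨a, _, ha⟩ => hx₁ a ha
  obtain ⟨a, ha, ha₂⟩ := (map_rowSpace_eq_rowSpace_or_colSpace hd hf hP hx₂0).resolve_right
    fun ⟨b, _, hb⟩ => hx₂ b hb
  obtain ⟨z₁, hz₁, hfz₁⟩ : tensorVec a b ∈ (rowSpace x₁).map f :=
    hb₁ ▸ tensorVec_mem_colSpace a b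
  obtain ⟨z₂, hz₂, hfz₂⟩ : tensorVec a b ∈ (rowSpace x₂).map f :=
    ha₂ ▸ tensorVec_mem_rowSpace a b
  have hz : z₁ = z₂ := hf (hfz₁.trans hfz₂.symm)
  have hz0 : z₁ ≠ 0 := by
    rintro rfl
    simp [eq_comm, tensorVec_eq_zero_iff, ha, hb] at hfz₁
  have hrow := rowSpace_eq_of_mem hz0 hz₁ (hz ▸ hz₂)
  exact rowSpace_ne_colSpace hd ha b (ha₂.symm.trans (hrow ▸ hb₁))

lemma MapsRowsToRows.map_rowSpace_eq (hR : MapsRowsToRows f) (hf : Injective f)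
    {x y a : Fin d → ℂ} (hxy : tensorVec x y ≠ 0) (h : f (tensorVec x y) ∈ rowSpace a) :
    (rowSpace x).map f = rowSpace a := by
  obtain ⟨a', ha'⟩ := hR x
  rw [ha']
  exact rowSpace_eq_of_mem ((map_ne_zero_iff f hf).mpr hxy)
    (ha' ▸ Submodule.mem_map_of_mem (tensorVec_mem_rowSpace x y)) h

lemma MapsRowsToRows.not_comp_swapₗ (hd : 2 ≤ d) (hf : Injective f) (hR : MapsRowsToRows f) :
    ¬ MapsRowsToRows (f ∘ₗ swapₗ) := by
  intro hC
  let i₀ : Fin d := ⟨0, by omega⟩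
  let i₁ : Fin d := ⟨1, by omega⟩
  obtain ⟨c, hc⟩ := hC (Pi.single i₀ 1)
  have hrow i : (rowSpace (Pi.single i 1)).map f = rowSpace c :=
    hR.map_rowSpace_eq hf (tensorVec_single_ne_zero i i₀) <| hc.le
      ⟨tensorVec (Pi.single i₀ 1) (Pi.single i 1), tensorVec_mem_rowSpace _ _, by simp⟩
  have h01 := Submodule.map_injective_of_injective hf ((hrow i₀).trans (hrow i₁).symm)
  obtain ⟨v, hv⟩ : tensorVec (Pi.single i₀ 1) (Pi.single i₀ 1) ∈ rowSpace (Pi.single i₁ 1) :=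
    h01 ▸ tensorVec_mem_rowSpace _ _
  simpa [tensorVec, i₀, i₁] using congrFun hv (i₀, i₀)

/-- Comparing the row of `x + x₀` with the rows of `x` and `x₀` shows that the right factor
of `f (x ⊗ y)` does not depend on `x`. -/
lemma apply_tensorVec_eq_of_linearIndependent {S : (Fin d → ℂ) →ₗ[ℂ] (Fin d → ℂ)}
    (hrow : ∀ x, x ≠ 0 → (rowSpace x).map f = rowSpace (S x)) {x x₀ y t : Fin d → ℂ}
    (hind : LinearIndependent ℂ ![S x, S x₀]) (h₀ : f (tensorVec x₀ y) = tensorVec (S x₀) t) :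
    f (tensorVec x y) = tensorVec (S x) t := by
  have hx : x ≠ 0 := by
    rintro rfl
    exact hind.ne_zero 0 (by simp)
  have hxx₀ : x + x₀ ≠ 0 := fun h =>
    one_ne_zero (LinearIndependent.pair_iff.mp hind 1 1 (by simp [← map_add, h])).1
  obtain ⟨w, hw⟩ :=
    mem_rowSpace.mp ((hrow x hx).le (Submodule.mem_map_of_mem (tensorVec_mem_rowSpace x y)))
  obtain ⟨w', hw'⟩ :=
    mem_rowSpace.mp ((hrow _ hxx₀).le (Submodule.mem_map_of_mem (tensorVec_mem_rowSpace _ y)))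
  rw [tensorVec_add_left, map_add f, ← hw, h₀, map_add S] at hw'
  obtain ⟨hww', hw't⟩ := eq_zero_of_tensorVec_add_tensorVec_eq_zero hind
    (u := w' - w) (v := w' - t)
    (by rw [tensorVec_sub_right, tensorVec_sub_right, sub_add_sub_comm, ← tensorVec_add_left,
      hw', sub_self])
  rw [← hw, ← sub_eq_zero.mp hww', sub_eq_zero.mp hw't]

lemma MapsRowsToRows.exists_eq_kronecker (hf : Injective f) (hR : MapsRowsToRows f) {i₀ : Fin d}
    {b : Fin d → ℂ} (hC : ∀ x, f (tensorVec x (Pi.single i₀ 1)) ∈ colSpace b) :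
    ∃ S T : Matrix (Fin d) (Fin d) ℂ, f = (S ⊗ₖ T).mulVecLin := by
  let e (i : Fin d) : Fin d → ℂ := Pi.single i 1
  have hb : b ≠ 0 := by
    rintro rfl
    obtain ⟨u, hu⟩ := hC (e i₀)
    exact (map_ne_zero_iff f hf).mpr (tensorVec_single_ne_zero i₀ i₀)
      (by simpa [tensorVec] using hu.symm)
  obtain ⟨S, hS⟩ := LinearMap.exists_eq_apply_of_forall_mem_range (tensorVecₗ_flip_injective hb)
    (f ∘ₗ tensorVecₗ.flip (e i₀)) hC
  have hS' x : f (tensorVec x (e i₀)) = tensorVec (S x) b := hS x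
  have hS_eq_zero {x} (hx : S x = 0) : x = 0 := by
    have : tensorVec x (e i₀) = 0 :=
      hf (by rw [hS', hx, map_zero, tensorVec_eq_zero_iff.mpr (Or.inl rfl)])
    simpa [tensorVec_eq_zero_iff, e] using this
  have hrow x (hx : x ≠ 0) : (rowSpace x).map f = rowSpace (S x) :=
    hR.map_rowSpace_eq hf (by simp [tensorVec_eq_zero_iff, hx, e])
      (hS' x ▸ tensorVec_mem_rowSpace _ _)
  have hSe₀ : S (e i₀) ≠ 0 := fun h => by simpa [e] using hS_eq_zero h
  obtain ⟨T, hT⟩ := LinearMap.exists_eq_apply_of_forall_mem_range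
    (tensorVecₗ_injective hSe₀) (f ∘ₗ tensorVecₗ (e i₀))
    fun y => (hrow _ (by simp [e])).le (Submodule.mem_map_of_mem (tensorVec_mem_rowSpace _ y))
  have hT' y : f (tensorVec (e i₀) y) = tensorVec (S (e i₀)) (T y) := hT y
  have hST i j : f (tensorVec (e i) (e j)) = tensorVec (S (e i)) (T (e j)) := by
    rcases eq_or_ne i i₀ with rfl | hi
    · exact hT' (e j)
    refine apply_tensorVec_eq_of_linearIndependent hrow
      (LinearIndependent.pair_iff.mpr fun s t hst => ?_) (hT' (e j))
    have h0 := hS_eq_zero (x := s • e i + t • e i₀) (by rw [map_add, map_smul, map_smul, hst])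
    have hsi := congrFun h0 i
    have hti := congrFun h0 i₀
    simp [e, hi, hi.symm] at hsi hti
    exact ⟨hsi, hti⟩
  refine ⟨LinearMap.toMatrix' S, LinearMap.toMatrix' T,
    (Pi.basisFun ℂ (Fin d × Fin d)).ext fun ⟨i, j⟩ => ?_⟩
  rw [Pi.basisFun_apply, ← tensorVec_single_one, hST, Matrix.mulVecLin_apply,
    kronecker_mulVec_tensorVec, LinearMap.toMatrix'_mulVec, LinearMap.toMatrix'_mulVec]

end

theorem exists_kronecker_of_injective (hd : 2 ≤ d)
    {f : (Fin d × Fin d → ℂ) →ₗ[ℂ] (Fin d × Fin d → ℂ)} (hf : Injective f)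
    (hP : ∀ x y, Decomposable (f (tensorVec x y))) :
    ∃ S T : Matrix (Fin d) (Fin d) ℂ,
      f = (S ⊗ₖ T).mulVecLin ∨ f ∘ₗ swapₗ = (S ⊗ₖ T).mulVecLin := by
  have hf' : Injective (f ∘ₗ swapₗ) := hf.comp swapₗ_injective
  have hP' x y : Decomposable ((f ∘ₗ swapₗ) (tensorVec x y)) := by simpa using hP y x
  let i₀ : Fin d := ⟨0, by omega⟩
  rcases mapsRowsToRows_or_mapsRowsToCols hd hf hP with hR | hC <;>
    rcases mapsRowsToRows_or_mapsRowsToCols hd hf' hP' with hR' | hC'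
  · exact (hR.not_comp_swapₗ hd hf hR').elim
  · obtain ⟨b, hb⟩ := hC' (Pi.single i₀ 1)
    obtain ⟨S, T, h⟩ := hR.exists_eq_kronecker hf (i₀ := i₀) (b := b) fun x =>
      hb.le ⟨tensorVec (Pi.single i₀ 1) x, tensorVec_mem_rowSpace _ _, by simp⟩
    exact ⟨S, T, Or.inl h⟩
  · obtain ⟨b, hb⟩ := hC (Pi.single i₀ 1)
    obtain ⟨S, T, h⟩ := hR'.exists_eq_kronecker hf' (i₀ := i₀) (b := b) fun x =>
      hb.le ⟨tensorVec (Pi.single i₀ 1) x, tensorVec_mem_rowSpace _ _, by simp⟩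
    exact ⟨S, T, Or.inr h⟩
  · have hsf : Injective (swapₗ ∘ₗ f) := swapₗ_injective.comp hf
    exact (hC.swapₗ_comp.not_comp_swapₗ hd hsf hC'.swapₗ_comp).elim

lemma mulVecLin_permMatrix_prodComm :
    (Equiv.Perm.permMatrix ℂ (Equiv.prodComm (Fin d) (Fin d))).mulVecLin = swapₗ :=
  LinearMap.ext fun _ => permMatrix_mulVec _

end

lemma of_ite_swap_eq_permMatrix_prodComm {n R : Type*} [DecidableEq n] [Zero R] [One R] :
    Matrix.of (fun p q : n × n => if p.1 = q.2 ∧ p.2 = q.1 then (1 : R) else 0) =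
      Equiv.Perm.permMatrix R (Equiv.prodComm n n) := by
  ext p q
  simp [PEquiv.toMatrix_apply, Prod.ext_iff, eq_comm, and_comm]

lemma permMatrix_mem_unitaryGroup {n R : Type*} [DecidableEq n] [Fintype n] [CommRing R]
    [StarRing R] (σ : Equiv.Perm n) : σ.permMatrix R ∈ unitaryGroup n R := by
  rw [mem_unitaryGroup_iff', star_eq_conjTranspose, conjTranspose_permMatrix, ← permMatrix_mul,
    mul_inv_cancel, permMatrix_one]

lemma permMatrix_prodComm_mul_self {n R : Type*} [DecidableEq n] [Fintype n]
    [NonAssocSemiring R] :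
    Equiv.Perm.permMatrix R (Equiv.prodComm n n) * Equiv.Perm.permMatrix R (Equiv.prodComm n n) =
      1 := by
  rw [← permMatrix_mul]
  convert permMatrix_one
  ext <;> rfl

lemma eq_smul_one_of_kronecker_eq_one {m n K : Type*} [Fintype m] [DecidableEq m] [Nonempty m]
    [Fintype n] [DecidableEq n] [Nonempty n] [Field K] {A : Matrix m m K} {B : Matrix n n K}
    (h : A ⊗ₖ B = 1) : ∃ c : K, c ≠ 0 ∧ A = c • 1 ∧ B = c⁻¹ • 1 := by
  obtain ⟨i⟩ := ‹Nonempty m›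
  obtain ⟨j⟩ := ‹Nonempty n›
  have hAB i k j l : A i k * B j l = if i = k ∧ j = l then 1 else 0 := by
    simpa [Matrix.one_apply, Prod.ext_iff] using congrFun (congrFun h (i, j)) (k, l)
  have hii : A i i * B j j = 1 := by simpa using hAB i i j j
  have hB : B j j ≠ 0 := right_ne_zero_of_mul_eq_one hii
  refine ⟨(B j j)⁻¹, inv_ne_zero hB, ?_, ?_⟩
  · ext k l
    have := hAB k l j j
    rw [Matrix.smul_apply, smul_eq_mul, eq_inv_mul_iff_mul_eq₀ hB, mul_comm, this]
    simp [one_apply]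
  · ext k l
    have := hAB i i k l
    rw [eq_inv_of_mul_eq_one_left hii, inv_mul_eq_iff_eq_mul₀ hB] at this
    rw [inv_inv, Matrix.smul_apply, smul_eq_mul, this]
    simp [one_apply]

lemma exists_unitary_kronecker_eq {m n 𝕜 : Type*} [Fintype m] [DecidableEq m] [Nonempty m]
    [Fintype n] [DecidableEq n] [Nonempty n] [RCLike 𝕜] {S : Matrix m m 𝕜} {T : Matrix n n 𝕜}
    (h : S ⊗ₖ T ∈ unitaryGroup (m × n) 𝕜) :
    ∃ S' T', S' ∈ unitaryGroup m 𝕜 ∧ T' ∈ unitaryGroup n 𝕜 ∧ S' ⊗ₖ T' = S ⊗ₖ T := by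
  have h1 : (Sᴴ * S) ⊗ₖ (Tᴴ * T) = 1 := by
    rw [mul_kronecker_mul, ← conjTranspose_kronecker]
    exact mem_unitaryGroup_iff'.mp h
  obtain ⟨c, hc, hS, hT⟩ := eq_smul_one_of_kronecker_eq_one h1
  obtain ⟨i⟩ := ‹Nonempty m›
  have hcr : c = ((∑ p, ‖S p i‖ ^ 2 : ℝ) : 𝕜) := by
    simpa [mul_apply, RCLike.conj_mul] using (congrFun (congrFun hS i) i).symm
  set s : 𝕜 := ((√(∑ p, ‖S p i‖ ^ 2) : ℝ) : 𝕜)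
  have hss : star s * s = c := by
    rw [hcr, RCLike.star_def, RCLike.conj_ofReal, ← RCLike.ofReal_mul,
      Real.mul_self_sqrt (by positivity)]
  have hs : s ≠ 0 := fun h0 => hc (by rw [← hss, h0, mul_zero])
  refine ⟨s⁻¹ • S, s • T, ?_, ?_, ?_⟩
  · rw [mem_unitaryGroup_iff', star_smul, smul_mul_smul_comm, star_eq_conjTranspose, hS, smul_smul,
      star_inv₀, ← mul_inv, hss, inv_mul_cancel₀ hc, one_smul]
  · rw [mem_unitaryGroup_iff', star_smul, smul_mul_smul_comm, star_eq_conjTranspose, hT, smul_smul,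
      hss, mul_inv_cancel₀ hc, one_smul]
  · rw [smul_kronecker, kronecker_smul, smul_smul, inv_mul_cancel₀ hs, one_smul]

/-- A unitary `V` on `ℂᵈ ⊗ ℂᵈ` is primitive iff `V = S ⊗ T` or
`V = (S ⊗ T)P` for some unitaries `S, T` on `ℂᵈ`, where `P` is the swap. -/
theorem stmt9 {d : ℕ} (hd : 2 ≤ d) (V : Matrix (Fin d × Fin d) (Fin d × Fin d) ℂ)
    (hV : V ∈ Matrix.unitaryGroup (Fin d × Fin d) ℂ) :
    Primitive V ↔ ∃ S T : Matrix (Fin d) (Fin d) ℂ,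
      S ∈ Matrix.unitaryGroup (Fin d) ℂ ∧ T ∈ Matrix.unitaryGroup (Fin d) ℂ ∧
      (V = S ⊗ₖ T ∨ V = (S ⊗ₖ T) *
        Matrix.of (fun p q : Fin d × Fin d => if p.1 = q.2 ∧ p.2 = q.1 then (1 : ℂ) else 0)) := by
  have : Nonempty (Fin d) := ⟨⟨0, by omega⟩⟩
  rw [of_ite_swap_eq_permMatrix_prodComm]
  set P := Equiv.Perm.permMatrix ℂ (Equiv.prodComm (Fin d) (Fin d))
  constructor
  · intro hPrim
    have hf : Injective V.mulVecLin :=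
      mulVec_injective_iff_isUnit.mpr (Unitary.isUnit_coe (U := ⟨V, hV⟩))
    obtain ⟨S, T, hST | hST⟩ := exists_kronecker_of_injective hd hf hPrim
    · have hVST : V = S ⊗ₖ T := Matrix.toLin'.injective hST
      obtain ⟨S', T', hS', hT', h⟩ := exists_unitary_kronecker_eq (hVST ▸ hV)
      exact ⟨S', T', hS', hT', Or.inl (hVST.trans h.symm)⟩
    · have hVP : V * P = S ⊗ₖ T := Matrix.toLin'.injective <| by
        rwa [Matrix.toLin'_apply', mulVecLin_mul, mulVecLin_permMatrix_prodComm]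
      obtain ⟨S', T', hS', hT', h⟩ :=
        exists_unitary_kronecker_eq (hVP ▸ mul_mem hV (permMatrix_mem_unitaryGroup _))
      refine ⟨S', T', hS', hT', Or.inr ?_⟩
      rw [h, ← hVP, Matrix.mul_assoc, permMatrix_prodComm_mul_self, Matrix.mul_one]
  · rintro ⟨S, T, -, -, rfl | rfl⟩ x y
    · exact ⟨S *ᵥ x, T *ᵥ y, kronecker_mulVec_tensorVec S T x y⟩
    · refine ⟨S *ᵥ y, T *ᵥ x, ?_⟩
      rw [← mulVec_mulVec, permMatrix_mulVec, Equiv.coe_prodComm, tensorVec_comp_swap,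
        kronecker_mulVec_tensorVec]
end

section
/- The set of imprimitive 2-qudit gates is an open dense subset of the unitary group U(d²) of ℂᵈ ⊗ ℂᵈ. -/
/-!
Decomposability of `z` is the vanishing of the `2 × 2` minors of `z`, read as a `d × d` matrix;
this is a closed condition, so the primitive gates form a closed set. For density, let `V` be
primitive with `V (e ⊗ e) = u ⊗ v`, pick unit vectors `p ⊥ u` and `q ⊥ v`, and follow `V` by the
rotation through a small angle `θ` in the plane of `u ⊗ v` and `p ⊗ q`. This gate is unitary,
tends to `V` as `θ → 0`, and sends `e ⊗ e` to `cos θ • u ⊗ v + sin θ • p ⊗ q`, which has a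
nonzero `2 × 2` minor because `u, p` and `v, q` are linearly independent.
-/

open Matrix Kronecker Complex

open ComplexOrder in
lemma exists_minor_ne_zero_of_dotProduct_eq_zero {ι : Type*} [Fintype ι] {u p : ι → ℂ}
    (hu : u ≠ 0) (hp : p ≠ 0) (hup : star u ⬝ᵥ p = 0) : ∃ i k, u i * p k - u k * p i ≠ 0 := by
  by_contra! h
  obtain ⟨i, hi : u i ≠ 0⟩ := Function.ne_iff.mp hu
  have hpu : p = (p i / u i) • u := by
    funext k
    simp only [Pi.smul_apply, smul_eq_mul]
    field_simp
    linear_combination h i k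
  have hc : p i / u i = 0 := by
    rw [hpu, dotProduct_smul, smul_eq_mul] at hup
    exact (mul_eq_zero.mp hup).resolve_right (dotProduct_star_self_eq_zero.not.mpr hu)
  exact hp (by rw [hpu, hc, zero_smul])

lemma exists_unit_orthogonal_of_one_lt_card {ι : Type*} [Fintype ι]
    (hι : 1 < Fintype.card ι) (u : ι → ℂ) :
    ∃ w : ι → ℂ, star u ⬝ᵥ w = 0 ∧ star w ⬝ᵥ w = 1 := by
  set K := ℂ ∙ WithLp.toLp 2 u
  have hK : Module.finrank ℂ K ≤ 1 := by
    simpa using finrank_span_le_card (R := ℂ) ({WithLp.toLp 2 u} : Set (EuclideanSpace ℂ ι))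
  have hKperp : Kᗮ ≠ ⊥ := by
    intro h
    have := K.finrank_add_finrank_orthogonal
    rw [h, finrank_bot, finrank_euclideanSpace] at this
    omega
  obtain ⟨w, hwK, hw⟩ := Submodule.exists_mem_ne_zero_of_ne_bot hKperp
  have hwu : star u ⬝ᵥ w.ofLp = 0 := by
    rw [dotProduct_comm]
    exact Submodule.mem_orthogonal_singleton_iff_inner_right.mp hwK
  have hww : star w.ofLp ⬝ᵥ w.ofLp = (‖w‖ : ℂ) ^ 2 := by
    rw [dotProduct_comm]; exact inner_self_eq_norm_sq_to_K (𝕜 := ℂ) w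
  have hw0 : (‖w‖ : ℂ) ≠ 0 := by simpa using hw
  refine ⟨(‖w‖ : ℂ)⁻¹ • w.ofLp, by rw [dotProduct_smul, hwu, smul_zero], ?_⟩
  rw [star_smul, smul_dotProduct, dotProduct_smul, hww, Complex.star_def, map_inv₀, conj_ofReal,
    smul_eq_mul, smul_eq_mul]
  field_simp

lemma star_mulVec_dotProduct_mulVec_of_mem_unitaryGroup {m : Type*} [Fintype m] [DecidableEq m]
    {V : Matrix m m ℂ} (hV : V ∈ unitaryGroup m ℂ) (x y : m → ℂ) :
    star (V *ᵥ x) ⬝ᵥ V *ᵥ y = star x ⬝ᵥ y := by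
  rw [star_mulVec, dotProduct_mulVec, vecMul_vecMul, ← star_eq_conjTranspose,
    mem_unitaryGroup_iff'.mp hV, vecMul_one]

section Givens

variable {m : Type*} [DecidableEq m] {a b : m → ℂ}

/-- Rotation through `θ` in the plane of the orthonormal pair `a, b`, fixing its orthogonal
complement. -/
noncomputable def givens (a b : m → ℂ) (θ : ℝ) : Matrix m m ℂ :=
  1 + ((Real.cos θ : ℂ) - 1) • (vecMulVec a (star a) + vecMulVec b (star b)) +
    (Real.sin θ : ℂ) • (vecMulVec b (star a) - vecMulVec a (star b))

lemma givens_mem_unitaryGroup [Fintype m] (ha : star a ⬝ᵥ a = 1) (hb : star b ⬝ᵥ b = 1)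
    (hab : star a ⬝ᵥ b = 0) (θ : ℝ) : givens a b θ ∈ unitaryGroup m ℂ := by
  have hba : star b ⬝ᵥ a = 0 := by rw [star_dotProduct, hab, star_zero]
  have hcs : (Real.cos θ : ℂ) ^ 2 + (Real.sin θ : ℂ) ^ 2 = 1 := by
    exact_mod_cast Real.cos_sq_add_sin_sq θ
  rw [givens, mem_unitaryGroup_iff', star_eq_conjTranspose]
  simp only [conjTranspose_add, conjTranspose_smul, conjTranspose_sub, conjTranspose_one,
    conjTranspose_vecMulVec, star_star, star_sub, star_one, RCLike.star_def, conj_ofReal]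
  simp only [add_mul, mul_add, sub_mul, mul_sub, Matrix.smul_mul, Matrix.mul_smul, one_mul,
    mul_one, vecMulVec_mul_vecMulVec, ha, hb, hab, hba, one_smul, zero_smul, vecMulVec_zero]
  trans 1 + ((Real.cos θ : ℂ) ^ 2 + (Real.sin θ : ℂ) ^ 2 - 1) •
    (vecMulVec a (star a) + vecMulVec b (star b))
  · module
  · rw [hcs, sub_self, zero_smul, add_zero]

lemma givens_mulVec_left [Fintype m] (ha : star a ⬝ᵥ a = 1) (hab : star a ⬝ᵥ b = 0) (θ : ℝ) :
    givens a b θ *ᵥ a = (Real.cos θ : ℂ) • a + (Real.sin θ : ℂ) • b := by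
  have hba : star b ⬝ᵥ a = 0 := by rw [star_dotProduct, hab, star_zero]
  simp only [givens, add_mulVec, sub_mulVec, smul_mulVec, one_mulVec, vecMulVec_mulVec, ha, hba,
    op_smul_eq_smul, one_smul, zero_smul]
  module

@[simp]
lemma givens_zero (a b : m → ℂ) : givens a b 0 = 1 := by
  simp [givens]

lemma continuous_givens (a b : m → ℂ) : Continuous (givens a b) := by
  unfold givens
  fun_prop

lemma mem_closure_setOf_of_givens_mul [Fintype m] {P : Matrix m m ℂ → Prop}
    (V : unitaryGroup m ℂ) (ha : star a ⬝ᵥ a = 1) (hb : star b ⬝ᵥ b = 1)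
    (hab : star a ⬝ᵥ b = 0) (hP : ∀ θ ∈ Set.Ioo 0 (Real.pi / 2), P (givens a b θ * V)) :
    V ∈ closure {W : unitaryGroup m ℂ | P W} := by
  let path : ℝ → unitaryGroup m ℂ := fun θ =>
    ⟨givens a b θ * V, mul_mem (givens_mem_unitaryGroup ha hb hab θ) V.2⟩
  have hpath : Continuous path :=
    ((continuous_givens a b).mul continuous_const).subtype_mk _
  have h0 : path 0 = V := Subtype.ext (by simp [path])
  have hV : Filter.Tendsto path (nhdsWithin 0 (Set.Ioi 0)) (nhds V) :=
    (hpath.tendsto' 0 V h0).mono_left nhdsWithin_le_nhds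
  exact mem_closure_of_tendsto hV (Filter.eventually_of_mem (Ioo_mem_nhdsGT (by positivity)) hP)

end Givens

section TensorVec

variable {d : ℕ}

lemma decomposable_iff (z : Fin d × Fin d → ℂ) :
    Decomposable z ↔ ∀ i k j l, z (i, j) * z (k, l) = z (i, l) * z (k, j) := by
  constructor
  · rintro ⟨u, v, rfl⟩ i k j l
    simp only [tensorVec]
    ring
  · intro h
    by_cases hz : z = 0
    · exact ⟨0, 0, by funext p; simp [hz, tensorVec]⟩
    obtain ⟨p, hp : z p ≠ 0⟩ := Function.ne_iff.mp hz
    refine ⟨fun i => z (i, p.2), fun j => z (p.1, j) / z p, ?_⟩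
    funext q
    simp only [tensorVec]
    field_simp
    linear_combination h q.1 p.1 q.2 p.2

lemma isClosed_setOf_decomposable : IsClosed {z : Fin d × Fin d → ℂ | Decomposable z} := by
  simp only [decomposable_iff, Set.ofPred_forall]
  exact isClosed_iInter fun i => isClosed_iInter fun k => isClosed_iInter fun j =>
    isClosed_iInter fun l => isClosed_eq (by fun_prop) (by fun_prop)

lemma isClosed_setOf_primitive :
    IsClosed {V : Matrix (Fin d × Fin d) (Fin d × Fin d) ℂ | Primitive V} := by
  simp only [Primitive, Set.ofPred_forall]
  exact isClosed_iInter fun x => isClosed_iInter fun y =>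
    isClosed_setOf_decomposable.preimage (continuous_id.matrix_mulVec continuous_const)

lemma star_tensorVec_dotProduct (u v p q : Fin d → ℂ) :
    star (tensorVec u v) ⬝ᵥ tensorVec p q = (star u ⬝ᵥ p) * (star v ⬝ᵥ q) := by
  simp only [dotProduct, Pi.star_apply, tensorVec, Finset.sum_mul_sum, Fintype.sum_prod_type,
    star_mul']
  exact Finset.sum_congr rfl fun i _ => Finset.sum_congr rfl fun j _ => by ring

lemma not_decomposable_smul_tensorVec_add_smul_tensorVec {u v p q : Fin d → ℂ} {c s : ℂ}
    (hc : c ≠ 0) (hs : s ≠ 0) (hu : u ≠ 0) (hv : v ≠ 0) (hp : p ≠ 0) (hq : q ≠ 0)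
    (hup : star u ⬝ᵥ p = 0) (hvq : star v ⬝ᵥ q = 0) :
    ¬ Decomposable (c • tensorVec u v + s • tensorVec p q) := by
  obtain ⟨i, k, hik⟩ := exists_minor_ne_zero_of_dotProduct_eq_zero hu hp hup
  obtain ⟨j, l, hjl⟩ := exists_minor_ne_zero_of_dotProduct_eq_zero hv hq hvq
  intro H
  have hminor := (decomposable_iff _).mp H i k j l
  simp only [Pi.add_apply, Pi.smul_apply, smul_eq_mul, tensorVec] at hminor
  exact mul_ne_zero (mul_ne_zero hc hs) (mul_ne_zero hik hjl) (by linear_combination hminor)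

lemma mem_closure_setOf_not_primitive (hd : 2 ≤ d) (V : unitaryGroup (Fin d × Fin d) ℂ) :
    V ∈ closure {W : unitaryGroup (Fin d × Fin d) ℂ |
      ¬ Primitive (W : Matrix (Fin d × Fin d) (Fin d × Fin d) ℂ)} := by
  by_cases hV : Primitive (V : Matrix (Fin d × Fin d) (Fin d × Fin d) ℂ)
  swap
  · exact subset_closure hV
  let e : Fin d → ℂ := Pi.single ⟨0, by omega⟩ 1
  obtain ⟨u, v, huv⟩ := hV e e
  have hz : star (tensorVec u v) ⬝ᵥ tensorVec u v = 1 := by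
    rw [← huv, star_mulVec_dotProduct_mulVec_of_mem_unitaryGroup V.2, star_tensorVec_dotProduct]
    simp [e]
  have hu : u ≠ 0 := by rintro rfl; simp [star_tensorVec_dotProduct] at hz
  have hv : v ≠ 0 := by rintro rfl; simp [star_tensorVec_dotProduct] at hz
  have hcard : 1 < Fintype.card (Fin d) := by rw [Fintype.card_fin]; omega
  obtain ⟨p, hup, hp⟩ := exists_unit_orthogonal_of_one_lt_card hcard u
  obtain ⟨q, hvq, hq⟩ := exists_unit_orthogonal_of_one_lt_card hcard v
  have hzb : star (tensorVec u v) ⬝ᵥ tensorVec p q = 0 := by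
    rw [star_tensorVec_dotProduct, hup, zero_mul]
  refine mem_closure_setOf_of_givens_mul (P := fun W => ¬ Primitive W) V hz (b := tensorVec p q)
    (by rw [star_tensorVec_dotProduct, hp, hq, one_mul]) hzb fun θ hθ hP => ?_
  have hcos : (Real.cos θ : ℂ) ≠ 0 := ofReal_ne_zero.mpr (Real.cos_pos_of_mem_Ioo
    ⟨by linarith [Real.pi_pos, hθ.1], hθ.2⟩).ne'
  have hsin : (Real.sin θ : ℂ) ≠ 0 := ofReal_ne_zero.mpr (Real.sin_pos_of_pos_of_lt_pi hθ.1
    (by linarith [Real.pi_pos, hθ.2])).ne'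
  have hPe := hP e e
  rw [← mulVec_mulVec, huv, givens_mulVec_left hz hzb] at hPe
  exact not_decomposable_smul_tensorVec_add_smul_tensorVec hcos hsin hu hv
    (by rintro rfl; simp at hp) (by rintro rfl; simp at hq) hup hvq hPe

end TensorVec

/-- The imprimitive gates form an open dense subset of `U(d²)`. -/
theorem stmt10 {d : ℕ} (hd : 2 ≤ d) :
    IsOpen {V : Matrix.unitaryGroup (Fin d × Fin d) ℂ |
        ¬ Primitive (V : Matrix (Fin d × Fin d) (Fin d × Fin d) ℂ)} ∧
    Dense {V : Matrix.unitaryGroup (Fin d × Fin d) ℂ |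
        ¬ Primitive (V : Matrix (Fin d × Fin d) (Fin d × Fin d) ℂ)} :=
  ⟨(isClosed_setOf_primitive.preimage continuous_subtype_val).isOpen_compl,
    mem_closure_setOf_not_primitive hd⟩
end
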